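/- The six-dimensional Poincaré Lie algebra e(2,1) = so(2,1) ⋉ ℝ³ admits an integrable complex structure. Explicitly, with basis h = e₁₂ - e₂₁, s₁₃ = e₁₃ + e₃₁, s₂₃ = e₂₃ + e₃₂ of so(2,1) and standard basis e₁,e₂,e₃ of ℝ³, the endomorphism J defined by J h = e₃, J s₁₃ = s₂₃, J e₁ = e₂ (and J² = -id) satisfies N_J ≡ 0. -/

import Mathlib

/-- Nijenhuis tensor of an endomorphism `J` with respect to a bracket `br`. -/
def Nij {α : Type*} [AddCommGroup α] (br : α → α → α) (J : α → α) (x y : α) : α :=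
  J (br x y) - br (J x) y - br x (J y) - J (br (J x) (J y))

/-- The Poincaré algebra `e(2,1) = so(2,1) ⋉ ℝ³`, in coordinates: an element is a pair
`(a, v)` where `a = (a₀,a₁,a₂)` are the coefficients of the basis
`h = e₁₂-e₂₁`, `s₁₃ = e₁₃+e₃₁`, `s₂₃ = e₂₃+e₃₂` of `so(2,1)` and `v ∈ ℝ³`. -/
abbrev E21 := (Fin 3 → ℝ) × (Fin 3 → ℝ)

/-- The bracket of `so(2,1)` in the basis `(h, s₁₃, s₂₃)`:
`[h,s₁₃] = -s₂₃`, `[h,s₂₃] = s₁₃`, `[s₁₃,s₂₃] = h`. -/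
def so21br (a b : Fin 3 → ℝ) : Fin 3 → ℝ :=
  ![a 1 * b 2 - a 2 * b 1, a 0 * b 2 - a 2 * b 0, -(a 0 * b 1 - a 1 * b 0)]

/-- The standard action of `so(2,1)` on `ℝ³`:
`h e₁ = -e₂, h e₂ = e₁, s₁₃ e₁ = e₃, s₁₃ e₃ = e₁, s₂₃ e₂ = e₃, s₂₃ e₃ = e₂`. -/
def so21act (a v : Fin 3 → ℝ) : Fin 3 → ℝ :=
  ![a 0 * v 1 + a 1 * v 2, -(a 0 * v 0) + a 2 * v 2, a 1 * v 0 + a 2 * v 1]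

/-- The semidirect product bracket of `e(2,1)`: `[(A,u),(B,w)] = ([A,B], Aw - Bu)`. -/
def e21br (p q : E21) : E21 := (so21br p.1 q.1, so21act p.1 q.2 - so21act q.1 p.2)

/-- The endomorphism `J` of `e(2,1)` given by `Jh = e₃, Js₁₃ = s₂₃, Je₁ = e₂`
(extended by `Je₃ = -h, Js₂₃ = -s₁₃, Je₂ = -e₁`). -/
def Je21 (p : E21) : E21 := (![-(p.2 2), -(p.1 2), p.1 1], ![-(p.2 1), p.2 0, p.1 0])

theorem Je21_Je21 (p : E21) : Je21 (Je21 p) = -p := by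
  ext i <;> fin_cases i <;> simp [Je21]

theorem Nij_e21br_Je21 (p q : E21) : Nij e21br Je21 p q = 0 := by
  ext i <;> fin_cases i <;>
    simp only [Nij, e21br, Je21, so21br, so21act, Prod.fst_sub, Prod.snd_sub, Prod.fst_zero,
      Prod.snd_zero, Pi.sub_apply, Pi.zero_apply, Fin.zero_eta, Fin.mk_one, Fin.reduceFinMk,
      Matrix.cons_val] <;>
    ring

/-- `e(2,1)` admits an integrable complex structure: `J² = -id` and `N_J ≡ 0`. -/
theorem stmt3 :
    (∀ p : E21, Je21 (Je21 p) = -p) ∧ ∀ p q : E21, Nij e21br Je21 p q = 0 :=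
  ⟨Je21_Je21, Nij_e21br_Je21⟩
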